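/- Let M ⊨ T and a ∈ M. Then the type p = tp(a/P^M) is |T|⁺-isolated; moreover, tp(a/P^M) implies tp(a/P^C): any a' realizing tp(a/P^M) satisfies tp(a'/P^C) = tp(a/P^C). -/

import Mathlib

open FirstOrder FirstOrder.Language Cardinal

universe u

namespace OverPredicate

variable (L : FirstOrder.Language.{u, u}) (C : Type u) [L.Structure C] [L.IsRelational]
variable (P : L.Relations 1)

/-- The set of realizations of the distinguished predicate `P` in the monster model `C`. -/
def Pset : Set C := { x | Structure.RelMap P ![x] }

/-- The induced `L`-structure on a subset of the monster model
(the language is relational, so every subset is a substructure). -/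
def setStructure (A : Set C) : L.Structure A where
  funMap := fun f _ => isEmptyElim f
  RelMap := fun r x => Structure.RelMap r (fun i => (x i : C))

/-- Realization of a formula in the structure induced on a subset `A` of the monster. -/
def RealizeIn (A : Set C) {α : Type*} (φ : L.Formula α) (v : α → A) : Prop :=
  letI := setStructure L C A
  φ.Realize v

/-- Satisfaction of a sentence in the structure induced on a subset of the monster. -/
def SatIn (A : Set C) (σ : L.Sentence) : Prop :=
  RealizeIn L C A σ (fun e => isEmptyElim e)

/-- `A ≡ B`: the substructures of `C` with universes `A` and `B` are elementarily
equivalent, i.e. `Th(C|_A) = Th(C|_B)`. -/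
def ElemEquivSets (A B : Set C) : Prop := ∀ σ : L.Sentence, SatIn L C A σ ↔ SatIn L C B σ

/-- `A ≺ B` for subsets of the monster model. -/
def ElemSubset (A B : Set C) : Prop :=
  ∃ h : A ⊆ B, ∀ (m : ℕ) (φ : L.Formula (Fin m)) (x : Fin m → A),
    RealizeIn L C A φ x ↔ RealizeIn L C B φ (fun i => ⟨(x i : C), h (x i).2⟩)

/-- `M ≺ C`: the subset `M` is the universe of an elementary submodel of the monster
model; in particular `M ⊨ T`. -/
def ElemInC (M : Set C) : Prop :=
  ∀ (m : ℕ) (φ : L.Formula (Fin m)) (x : Fin m → M),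
    RealizeIn L C M φ x ↔ φ.Realize (fun i => (x i : C))

/-- Formulas with parameters in `A` and `n` free variables. -/
def FormulaOver (A : Set C) (n : ℕ) :=
  Σ m : ℕ, L.Formula (Fin n ⊕ Fin m) × (Fin m → A)

/-- The tuple `c` realizes (in the monster) the formula `χ` with parameters in `A`. -/
def Realizes (A : Set C) {n : ℕ} (c : Fin n → C) (χ : FormulaOver L C A n) : Prop :=
  χ.2.1.Realize (Sum.elim c (fun i => (χ.2.2 i : C)))

/-- The complete type of the tuple `c` over the set `A`. -/
def typeOf (A : Set C) {n : ℕ} (c : Fin n → C) : Set (FormulaOver L C A n) :=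
  { χ | Realizes L C A c χ }

/-- `c` realizes the partial type `p` over `A`. -/
def RealizesAll (A : Set C) {n : ℕ} (c : Fin n → C) (p : Set (FormulaOver L C A n)) : Prop :=
  ∀ χ ∈ p, Realizes L C A c χ

/-- A partial type over `A` is consistent iff it is realized in the monster model. -/
def Consistent (A : Set C) {n : ℕ} (p : Set (FormulaOver L C A n)) : Prop :=
  ∃ c : Fin n → C, RealizesAll L C A c p

/-- `A ⊆ C` is complete: whenever `C ⊨ (∃ x̄ ⊆ P) ψ(x̄, b̄)` with `b̄` from `A`, there is
a witness `ā` from `P ∩ A`. -/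
def IsComplete (A : Set C) : Prop :=
  ∀ (k m : ℕ) (ψ : L.Formula (Fin k ⊕ Fin m)) (b : Fin m → C), (∀ i, b i ∈ A) →
    (∃ x : Fin k → C, (∀ i, x i ∈ Pset L C P) ∧ ψ.Realize (Sum.elim x b)) →
    ∃ a : Fin k → C, (∀ i, a i ∈ Pset L C P ∩ A) ∧ ψ.Realize (Sum.elim a b)

/-- `S_*(A)`: complete types over `A` (in `n` variables) weakly orthogonal to `P`. -/
def SStar (A : Set C) (n : ℕ) : Set (Set (FormulaOver L C A n)) :=
  { p | ∃ c : Fin n → C, p = typeOf L C A c ∧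
      Pset L C P ∩ (A ∪ Set.range c) = Pset L C P ∩ A ∧
      IsComplete L C P (A ∪ Set.range c) }

/-- `A` is stable over `P`: for every `A'` elementarily equivalent to `A`,
`|S_*(A')| ≤ |A'| ^ |T|`. -/
def IsStableSet (A : Set C) : Prop :=
  ∀ B : Set C, ElemEquivSets L C A B →
    #(Σ n : ℕ, ↥(SStar L C P B n)) ≤ #↥B ^ (Language.card L + ℵ₀)

/-- `T` is fully stable over `P`: every complete set is stable over `P`. -/
def FullyStable : Prop := ∀ A : Set C, IsComplete L C P A → IsStableSet L C P A

/-- `T` is fully stable over `N ⊨ T^P`: every complete set with `P`-part `N` is stable. -/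
def FullyStableOverSet (N : Set C) : Prop :=
  ∀ A : Set C, IsComplete L C P A → Pset L C P ∩ A = N → IsStableSet L C P A

/-- `A` has the existence property over `P`. -/
def HasExistence (A : Set C) : Prop :=
  ∃ M : Set C, ElemInC L C M ∧ A ⊆ M ∧ Pset L C P ∩ M = Pset L C P ∩ A

/-- Hypothesis 1: (i) `P` is stably embedded; (ii) `0`-definable subsets of `P^C` are
`0`-definable in the induced structure `C^P`; (iii) `T` has quantifier elimination. -/
def Hypothesis1 : Prop :=
  (∀ (k m : ℕ) (ψ : L.Formula (Fin k ⊕ Fin m)) (a : Fin k → C),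
    ∃ (l : ℕ) (θ : L.Formula (Fin m ⊕ Fin l)) (c : Fin l → C),
      (∀ i, c i ∈ Pset L C P) ∧
      ∀ y : Fin m → C, (∀ i, y i ∈ Pset L C P) →
        (ψ.Realize (Sum.elim a y) ↔ θ.Realize (Sum.elim y c))) ∧
  (∀ (m : ℕ) (φ : L.Formula (Fin m)),
    (∀ x : Fin m → C, φ.Realize x → ∀ i, x i ∈ Pset L C P) →
    ∃ θ : L.Formula (Fin m),
      ∀ x : Fin m → ↥(Pset L C P),
        (φ.Realize (fun i => (x i : C)) ↔ RealizeIn L C (Pset L C P) θ x)) ∧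
  (∀ (m : ℕ) (φ : L.Formula (Fin m)), ∃ θ : L.Formula (Fin m),
    θ.IsQF ∧ ∀ x : Fin m → C, (φ.Realize x ↔ θ.Realize x))

/-- A system of uniform defining formulas `Ψ_ψ(ȳ, z̄)`, one for each `ψ(x̄, ȳ)`. -/
def UniformDefs :=
  ∀ (k m : ℕ), L.Formula (Fin k ⊕ Fin m) → Σ l : ℕ, L.Formula (Fin m ⊕ Fin l)

/-- `U` is a system of uniform definitions of `ψ`-types over `P`. -/
def IsUniformDefs (U : UniformDefs L) : Prop :=
  ∀ (k m : ℕ) (ψ : L.Formula (Fin k ⊕ Fin m)) (a : Fin k → C),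
    ∃ c : Fin (U k m ψ).1 → C, (∀ i, c i ∈ Pset L C P) ∧
      ∀ y : Fin m → C, (∀ i, y i ∈ Pset L C P) →
        (ψ.Realize (Sum.elim a y) ↔ (U k m ψ).2.Realize (Sum.elim y c))

/-- Semantic implication between partial types over `A`. -/
def ImpliesSet (A : Set C) {n : ℕ} (r p : Set (FormulaOver L C A n)) : Prop :=
  ∀ c : Fin n → C, RealizesAll L C A c r → RealizesAll L C A c p

/-- The restriction `p ↾ φ` of a type to instances (or negated instances) of `φ`. -/
def restrictTo (A : Set C) {n : ℕ} (p : Set (FormulaOver L C A n)) (m : ℕ)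
    (φ : L.Formula (Fin n ⊕ Fin m)) : Set (FormulaOver L C A n) :=
  { χ ∈ p | ∃ b : Fin m → A, χ = ⟨m, φ, b⟩ ∨ χ = ⟨m, φ.not, b⟩ }

/-- A type over `A` is locally isolated if each of its restrictions `p ↾ φ` is
implied by a single formula in `p`. -/
def LocallyIsolated (A : Set C) {n : ℕ} (p : Set (FormulaOver L C A n)) : Prop :=
  ∀ (m : ℕ) (φ : L.Formula (Fin n ⊕ Fin m)),
    ∃ θ ∈ p, ImpliesSet L C A {θ} (restrictTo L C A p m φ)

/-- A type `p` is `λ`-isolated if it is implied by a subset of size `< λ`. -/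
def LambdaIsolated (A : Set C) {n : ℕ} (lam : Cardinal.{u})
    (p : Set (FormulaOver L C A n)) : Prop :=
  ∃ r ⊆ p, #↥r < lam ∧ ImpliesSet L C A r p

/-- `D` is locally constructible over `B`. -/
def LocallyConstructible (B D : Set C) : Prop :=
  B ⊆ D ∧ ∃ (α : Ordinal.{u}) (d : Ordinal.{u} → C),
    D = B ∪ d '' Set.Iio α ∧
    ∀ i < α, LocallyIsolated L C (B ∪ d '' Set.Iio i)
      (typeOf L C (B ∪ d '' Set.Iio i) (fun _ : Fin 1 => d i))

/-- Relativized universal quantification: `(∀ z̄ ⊆ P) θ(·, z̄)`. -/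
noncomputable def pAlls {α : Type*} (l : ℕ) (θ : L.Formula (α ⊕ Fin l)) : L.Formula α :=
  Formula.iAlls (Fin l)
    ((List.finRange l).foldr
      (fun j acc => (Relations.formula P ![Term.var (Sum.inr j)]).imp acc) θ)

/-- Relativized existential quantification: `(∃ z̄ ⊆ P) θ(·, z̄)`. -/
noncomputable def pExs {α : Type*} (l : ℕ) (θ : L.Formula (α ⊕ Fin l)) : L.Formula α :=
  Formula.iExs (Fin l)
    ((List.finRange l).foldr
      (fun j acc => (Relations.formula P ![Term.var (Sum.inr j)]) ⊓ acc) θ)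

/-- Standardize a formula `ψ(x̄, ȳ, z̄)` to the shape `ψ(w̄, z̄)` used for uniform definitions. -/
def psiStd {n m l : ℕ} (ψ : L.Formula ((Fin n ⊕ Fin m) ⊕ Fin l)) :
    L.Formula (Fin (n + m) ⊕ Fin l) :=
  ψ.relabel (Sum.map (⇑finSumFinEquiv) id)

/-- The number of parameters of the uniform definition of `ψ`. -/
def defLen (U : UniformDefs L) {n m l : ℕ} (ψ : L.Formula ((Fin n ⊕ Fin m) ⊕ Fin l)) : ℕ :=
  (U (n + m) l (psiStd L ψ)).1

/-- The uniform defining formula `Ψ_ψ(z̄, w̄)` for `ψ(x̄, ȳ, z̄)`. -/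
def defFml (U : UniformDefs L) {n m l : ℕ} (ψ : L.Formula ((Fin n ⊕ Fin m) ⊕ Fin l)) :
    L.Formula (Fin l ⊕ Fin (defLen L U ψ)) :=
  (U (n + m) l (psiStd L ψ)).2

/-- Combine two parameter tuples into one. -/
def combParams {γ : Type*} {m l : ℕ} (b : Fin m → γ) (d : Fin l → γ) : Fin (m + l) → γ :=
  fun i => Sum.elim b d (finSumFinEquiv.symm i)

/-- The formula `(∀ z̄ ⊆ P) [ψ(x̄, ȳ, z̄) ↔ Ψ_ψ(z̄, w̄)]`, with free variables `x̄` and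
parameter slots `ȳ w̄`. -/
noncomputable def eqDefFormula (U : UniformDefs L) {n m l : ℕ}
    (ψ : L.Formula ((Fin n ⊕ Fin m) ⊕ Fin l)) :
    L.Formula (Fin n ⊕ Fin (m + defLen L U ψ)) :=
  pAlls L P l
    ((ψ.relabel (fun v => match v with
        | Sum.inl (Sum.inl i) => Sum.inl (Sum.inl i)
        | Sum.inl (Sum.inr j) => Sum.inl (Sum.inr (Fin.castAdd (defLen L U ψ) j))
        | Sum.inr z => Sum.inr z)).iff
      ((defFml L U ψ).relabel (fun v => match v with
        | Sum.inl z => Sum.inr z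
        | Sum.inr j => Sum.inl (Sum.inr (Fin.natAdd m j)))))

/-- The formula `[(∃ z̄ ⊆ P) ψ(x̄, ȳ, z̄)] → ψ(x̄, ȳ, z̄')`, with free variables `x̄` and
parameter slots `ȳ z̄'`. -/
noncomputable def exImpFormula {n m l : ℕ}
    (ψ : L.Formula ((Fin n ⊕ Fin m) ⊕ Fin l)) :
    L.Formula (Fin n ⊕ Fin (m + l)) :=
  (pExs L P l (ψ.relabel (fun v => match v with
      | Sum.inl (Sum.inl i) => Sum.inl (Sum.inl i)
      | Sum.inl (Sum.inr j) => Sum.inl (Sum.inr (Fin.castAdd l j))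
      | Sum.inr z => Sum.inr z))).imp
    (ψ.relabel (fun v => match v with
      | Sum.inl (Sum.inl i) => Sum.inl i
      | Sum.inl (Sum.inr j) => Sum.inr (Fin.castAdd l j)
      | Sum.inr z => Sum.inr (Fin.natAdd m z)))

/-- `r` is a `Δ`-type over `A`. -/
def IsDeltaType (A : Set C) {n : ℕ} (Δ : Set (Σ m : ℕ, L.Formula (Fin n ⊕ Fin m)))
    (r : Set (FormulaOver L C A n)) : Prop :=
  ∀ χ ∈ r, ∃ ψ ∈ Δ, ∃ b : Fin ψ.1 → A,
    χ = ⟨ψ.1, ψ.2, b⟩ ∨ χ = ⟨ψ.1, ψ.2.not, b⟩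

/-- `r` and `s` are explicitly contradictory. -/
def ExplicitlyContradictory (A : Set C) {n : ℕ}
    (r s : Set (FormulaOver L C A n)) : Prop :=
  ∃ (m : ℕ) (ψ : L.Formula (Fin n ⊕ Fin m)) (b : Fin m → A),
    (⟨m, ψ, b⟩ : FormulaOver L C A n) ∈ r ∧ (⟨m, ψ.not, b⟩ : FormulaOver L C A n) ∈ s

/-- The rank `R^n_A(p, Δ₁, Δ₂, λ) ≥ β` (for finite `β`), relative to a fixed system `U`
of uniform defining formulas. -/
noncomputable def RankGE (U : UniformDefs L) (A : Set C) (n : ℕ)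
    (Δ₁ : Set (Σ m : ℕ, L.Formula (Fin n ⊕ Fin m)))
    (Δ₂ : Set (Σ m : ℕ, Σ l : ℕ, L.Formula ((Fin n ⊕ Fin m) ⊕ Fin l)))
    (lam : Cardinal.{u}) : ℕ → Set (FormulaOver L C A n) → Prop
  | 0, p => Consistent L C A p
  | (β + 1), p =>
      if Even β then
        ∀ μ : Ordinal.{u}, μ.card < lam → ∀ q ⊆ p, q.Finite →
          ∃ r : { i : Ordinal.{u} // i ≤ μ } → Set (FormulaOver L C A n),
            (∀ i, IsDeltaType L C A Δ₁ (r i)) ∧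
            (∀ i j, i ≠ j → ExplicitlyContradictory L C A (r i) (r j)) ∧
            (∀ i, RankGE U A n Δ₁ Δ₂ lam β (q ∪ r i))
      else
        ∀ μ : Ordinal.{u}, μ.card < lam → ∀ q ⊆ p, q.Finite →
          ∀ ψ : { i : Ordinal.{u} // i ≤ μ } →
              (Σ m : ℕ, Σ l : ℕ, L.Formula ((Fin n ⊕ Fin m) ⊕ Fin l)),
            (∀ i, ψ i ∈ Δ₂) →
            ∀ b : ∀ i, Fin (ψ i).1 → A,
              ∃ d : ∀ i, Fin (defLen L U (ψ i).2.2) → ↥(Pset L C P ∩ A),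
                RankGE U A n Δ₁ Δ₂ lam β
                  (q ∪ Set.range fun i =>
                    (⟨(ψ i).1 + defLen L U (ψ i).2.2, eqDefFormula L P U (ψ i).2.2,
                      combParams (b i) (fun j => (⟨(d i j : C), (d i j).2.2⟩ : A))⟩ :
                      FormulaOver L C A n))

/-- The definable closure of `A` in the monster model. -/
def dclSet (A : Set C) : Set C :=
  { b | ∃ (k : ℕ) (φ : L.Formula (Fin 1 ⊕ Fin k)) (a : Fin k → A),
      φ.Realize (Sum.elim (fun _ => b) (fun i => (a i : C))) ∧
      ∀ b' : C, φ.Realize (Sum.elim (fun _ => b') (fun i => (a i : C))) → b' = b }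

/-- The algebraic closure of `A` in the monster model. -/
def aclSet (A : Set C) : Set C :=
  { b | ∃ (k : ℕ) (φ : L.Formula (Fin 1 ⊕ Fin k)) (a : Fin k → A),
      φ.Realize (Sum.elim (fun _ => b) (fun i => (a i : C))) ∧
      { b' : C | φ.Realize (Sum.elim (fun _ => b') (fun i => (a i : C))) }.Finite }

/-- `T^P` eliminates imaginaries: every subset of a power of `P^C` definable with
parameters in the induced structure `C^P` has a code there. -/
def EliminatesImaginariesP : Prop :=
  ∀ (n : ℕ) (X : Set (Fin n → ↥(Pset L C P))),
    (∃ (k : ℕ) (ψ : L.Formula (Fin n ⊕ Fin k)) (b : Fin k → ↥(Pset L C P)),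
        ∀ x, x ∈ X ↔ RealizeIn L C (Pset L C P) ψ (Sum.elim x b)) →
    ∃ (l : ℕ) (φ : L.Formula (Fin n ⊕ Fin l)) (c : Fin l → ↥(Pset L C P)),
      (∀ x, x ∈ X ↔ RealizeIn L C (Pset L C P) φ (Sum.elim x c)) ∧
      ∀ c' : Fin l → ↥(Pset L C P),
        (∀ x, x ∈ X ↔ RealizeIn L C (Pset L C P) φ (Sum.elim x c')) → c' = c

/-- The subset `N` of the monster is `λ`-saturated (as an `L`-structure). -/
def IsSaturatedSet (N : Set C) (lam : Cardinal.{u}) : Prop :=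
  ∀ p : Set (Σ k : ℕ, L.Formula (Fin 1 ⊕ Fin k) × (Fin k → N)),
    #↥p < lam →
    (∀ q ⊆ p, q.Finite →
       ∃ c : N, ∀ χ ∈ q, RealizeIn L C N χ.2.1 (Sum.elim (fun _ : Fin 1 => c) χ.2.2)) →
    ∃ c : N, ∀ χ ∈ p, RealizeIn L C N χ.2.1 (Sum.elim (fun _ : Fin 1 => c) χ.2.2)

/-- `f` is a partial elementary map from `D` into the monster model. -/
def PartialElemMap (D : Set C) (f : D → C) : Prop :=
  ∀ (m : ℕ) (φ : L.Formula (Fin m)) (x : Fin m → D),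
    φ.Realize (fun i => ((x i) : C)) ↔ φ.Realize (fun i => f (x i))


/-!
By stable embeddedness, the `ψ`-type of `ā` over `P^C` is defined by some `θ(ȳ, c̄)`
with `c̄` from `P^C`. That such parameters exist is a formula satisfied by `ā`, so since
`M ≺ C` they can be found in `P^M`; then `(∀ ȳ ⊆ P) (ψ(x̄, ȳ) ↔ θ(ȳ, c̄))` lies in
`tp(ā/P^M)` and fixes the `ψ`-type over `P^C` of everything realizing it. One such formula
for each of the `|T|` formulas `ψ` isolates `tp(ā/P^M)` and determines `tp(ā/P^C)`.
-/

section Relativized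

variable {L : FirstOrder.Language.{u, u}} (P : L.Relations 1) {N : Type*} [L.Structure N]

lemma realize_pAlls {α : Type*} {l : ℕ} (θ : L.Formula (α ⊕ Fin l)) (v : α → N) :
    (pAlls L P l θ).Realize v ↔
      ∀ z : Fin l → N, (∀ i, Structure.RelMap P ![z i]) → θ.Realize (Sum.elim v z) := by
  have guards : ∀ (js : List (Fin l)) (w : α ⊕ Fin l → N),
      (js.foldr (fun j acc => (Relations.formula P ![Term.var (Sum.inr j)]).imp acc) θ
        ).Realize w ↔ ((∀ j ∈ js, Structure.RelMap P ![w (Sum.inr j)]) → θ.Realize w) := by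
    intro js w
    induction js with
    | nil => simp
    | cons j js ih =>
      simp only [List.foldr_cons, Formula.realize_imp, ih, List.forall_mem_cons]
      rw [← Relations.formula₁, Formula.realize_rel₁, and_imp]
      rfl
  simp [pAlls, Formula.realize_iAlls, guards]

lemma realize_pExs {α : Type*} {l : ℕ} (θ : L.Formula (α ⊕ Fin l)) (v : α → N) :
    (pExs L P l θ).Realize v ↔
      ∃ z : Fin l → N, (∀ i, Structure.RelMap P ![z i]) ∧ θ.Realize (Sum.elim v z) := by
  have guards : ∀ (js : List (Fin l)) (w : α ⊕ Fin l → N),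
      (js.foldr (fun j acc => (Relations.formula P ![Term.var (Sum.inr j)]) ⊓ acc) θ
        ).Realize w ↔ ((∀ j ∈ js, Structure.RelMap P ![w (Sum.inr j)]) ∧ θ.Realize w) := by
    intro js w
    induction js with
    | nil => simp
    | cons j js ih =>
      simp only [List.foldr_cons, Formula.realize_inf, ih, List.forall_mem_cons]
      rw [← Relations.formula₁, Formula.realize_rel₁, and_assoc]
      rfl
  simp [pExs, Formula.realize_iExs, guards]

/-- `(∀ ȳ ⊆ P) (ψ(x̄, ȳ) ↔ θ(ȳ, z̄))`: the parameters `z̄` of `θ` define the `ψ`-type of `x̄`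
over `P`. -/
noncomputable def pDefines {α : Type*} {m l : ℕ} (ψ : L.Formula (α ⊕ Fin m))
    (θ : L.Formula (Fin m ⊕ Fin l)) : L.Formula (α ⊕ Fin l) :=
  pAlls L P m ((ψ.relabel (Sum.elim (Sum.inl ∘ Sum.inl) Sum.inr)).iff
    (θ.relabel (Sum.elim Sum.inr (Sum.inl ∘ Sum.inr))))

lemma realize_pDefines {α : Type*} {m l : ℕ} (ψ : L.Formula (α ⊕ Fin m))
    (θ : L.Formula (Fin m ⊕ Fin l)) (v : α → N) (z : Fin l → N) :
    (pDefines P ψ θ).Realize (Sum.elim v z) ↔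
      ∀ y : Fin m → N, (∀ i, Structure.RelMap P ![y i]) →
        (ψ.Realize (Sum.elim v y) ↔ θ.Realize (Sum.elim y z)) := by
  rw [pDefines, realize_pAlls]
  simp only [Formula.realize_iff, Formula.realize_relabel, Sum.comp_elim, ← Function.comp_assoc,
    Sum.elim_comp_inl, Sum.elim_comp_inr]

end Relativized

lemma mk_sigma_formula_le {L : FirstOrder.Language.{u, u}} (n : ℕ) :
    #(Σ m : ℕ, L.Formula (Fin n ⊕ Fin m)) ≤ L.card + ℵ₀ := by
  have formula_le : ∀ m, #(L.Formula (Fin n ⊕ Fin m)) ≤ L.card + ℵ₀ := fun m =>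
    calc #(L.Formula (Fin n ⊕ Fin m))
        ≤ #(Σ k, L.BoundedFormula (Fin n ⊕ Fin m) k) :=
          mk_le_of_injective
            (sigma_mk_injective (β := L.BoundedFormula (Fin n ⊕ Fin m)) (i := 0))
      _ ≤ max ℵ₀ (lift #(Fin n ⊕ Fin m) + lift L.card) := BoundedFormula.card_le
      _ ≤ L.card + ℵ₀ := by
          refine max_le le_add_self ?_
          rw [lift_uzero, add_comm]
          exact add_le_add le_rfl (lift_le_aleph0.2 (mk_le_aleph0 (α := Fin n ⊕ Fin m)))
  calc #(Σ m : ℕ, L.Formula (Fin n ⊕ Fin m))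
      = sum fun m => #(L.Formula (Fin n ⊕ Fin m)) := mk_sigma _
    _ ≤ sum fun _ : ℕ => L.card + ℵ₀ := sum_le_sum _ _ formula_le
    _ = L.card + ℵ₀ := by simp [aleph0_mul_eq le_add_self]

section Transfer

variable {L C P} {M : Set C}

lemma relMap_setStructure_iff {A : Set C} (x : A) :
    (setStructure L C A).RelMap P ![x] ↔ (x : C) ∈ Pset L C P := by
  show Structure.RelMap P (fun i => ((![x] i : A) : C)) ↔ Structure.RelMap P ![(x : C)]
  simp only [Matrix.vec_single_eq_const]

lemma ElemInC.realize_iff (hM : ElemInC L C M) {β : Type*} [Finite β] (φ : L.Formula β)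
    (x : β → M) : RealizeIn L C M φ x ↔ φ.Realize (fun i => (x i : C)) := by
  obtain ⟨m, ⟨e⟩⟩ := Finite.exists_equiv_fin β
  have h := hM m (φ.relabel e) (x ∘ e.symm)
  simpa [RealizeIn, Formula.realize_relabel, Function.comp_def] using h

lemma ElemInC.exists_of_realize_pExs (hM : ElemInC L C M) {β : Type*} [Finite β] {l : ℕ}
    (φ : L.Formula (β ⊕ Fin l)) (v : β → M)
    (h : (pExs L P l φ).Realize (fun i => (v i : C))) :
    ∃ z : Fin l → C, (∀ i, z i ∈ Pset L C P ∩ M) ∧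
      φ.Realize (Sum.elim (fun i => (v i : C)) z) := by
  let := setStructure L C M
  obtain ⟨z, hzP, hz⟩ := (realize_pExs P φ v).1 ((hM.realize_iff _ v).2 h)
  refine ⟨fun i => z i, fun i => ⟨(relMap_setStructure_iff (z i)).1 (hzP i), (z i).2⟩, ?_⟩
  convert (hM.realize_iff φ (Sum.elim v z)).1 hz using 2 with i
  cases i <;> rfl

lemma exists_mem_typeOf_forcing_realize (h1 : Hypothesis1 L C P) (hM : ElemInC L C M) {n : ℕ}
    {a : Fin n → C} (ha : ∀ i, a i ∈ M) {m : ℕ} (ψ : L.Formula (Fin n ⊕ Fin m)) :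
    ∃ χ ∈ typeOf L C (Pset L C P ∩ M) a, ∀ a' : Fin n → C,
      Realizes L C (Pset L C P ∩ M) a' χ → ∀ y : Fin m → C, (∀ i, y i ∈ Pset L C P) →
        (ψ.Realize (Sum.elim a' y) ↔ ψ.Realize (Sum.elim a y)) := by
  obtain ⟨l, θ, c, hcP, hc⟩ := h1.1 n m ψ a
  have hex : (pExs L P l (pDefines P ψ θ)).Realize a :=
    (realize_pExs P _ a).2 ⟨c, hcP, (realize_pDefines P ψ θ a c).2 hc⟩
  obtain ⟨z, hz, hdef⟩ := hM.exists_of_realize_pExs _ (fun i => ⟨a i, ha i⟩) hex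
  refine ⟨⟨l, pDefines P ψ θ, fun i => ⟨z i, hz i⟩⟩, hdef, fun a' ha' y hy => ?_⟩
  exact ((realize_pDefines P ψ θ a' z).1 ha' y hy).trans
    ((realize_pDefines P ψ θ a z).1 hdef y hy).symm

lemma exists_small_subset_typeOf_forcing_realize (h1 : Hypothesis1 L C P)
    (hM : ElemInC L C M) {n : ℕ} {a : Fin n → C} (ha : ∀ i, a i ∈ M) :
    ∃ r ⊆ typeOf L C (Pset L C P ∩ M) a, #r ≤ L.card + ℵ₀ ∧
      ∀ a' : Fin n → C, RealizesAll L C (Pset L C P ∩ M) a' r →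
        ∀ (m : ℕ) (ψ : L.Formula (Fin n ⊕ Fin m)) (y : Fin m → C), (∀ i, y i ∈ Pset L C P) →
          (ψ.Realize (Sum.elim a' y) ↔ ψ.Realize (Sum.elim a y)) := by
  choose χ hχa hχ using fun ψ : Σ m, L.Formula (Fin n ⊕ Fin m) =>
    exists_mem_typeOf_forcing_realize h1 hM ha ψ.2
  refine ⟨Set.range χ, Set.range_subset_iff.2 hχa, mk_range_le.trans (mk_sigma_formula_le n),
    fun a' ha' m ψ => hχ ⟨m, ψ⟩ a' (ha' _ (Set.mem_range_self _))⟩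

end Transfer

/-- Let `M ⊨ T` and `a ∈ M`.  Then `p = tp(a/P^M)` is `|T|⁺`-isolated;
moreover `tp(a/P^M)` implies `tp(a/P^C)`: any `a'` realizing `tp(a/P^M)` satisfies
`tp(a'/P^C) = tp(a/P^C)`. -/
theorem type_over_P_part_of_model_is_isolated
    (h1 : Hypothesis1 L C P)
    (M : Set C) (hM : ElemInC L C M) (a : C) (ha : a ∈ M) :
    LambdaIsolated L C (Pset L C P ∩ M) (Order.succ (Language.card L + ℵ₀))
      (typeOf L C (Pset L C P ∩ M) (fun _ : Fin 1 => a)) ∧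
    ∀ a' : C,
      RealizesAll L C (Pset L C P ∩ M) (fun _ : Fin 1 => a')
        (typeOf L C (Pset L C P ∩ M) (fun _ : Fin 1 => a)) →
      typeOf L C (Pset L C P) (fun _ : Fin 1 => a') =
        typeOf L C (Pset L C P) (fun _ : Fin 1 => a) := by
  obtain ⟨r, hr, hcard, hforce⟩ :=
    exists_small_subset_typeOf_forcing_realize h1 hM (a := fun _ : Fin 1 => a) fun _ => ha
  refine ⟨⟨r, hr, hcard.trans_lt (Order.lt_succ _), fun c hc χ hχ => ?_⟩, fun a' ha' => ?_⟩
  · exact (hforce c hc _ χ.2.1 _ fun i => (χ.2.2 i).2.1).2 hχ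
  · ext χ
    exact hforce _ (fun χ hχ => ha' χ (hr hχ)) _ χ.2.1 _ fun i => (χ.2.2 i).2

end OverPredicate
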